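/- arXiv:2012.11659 — 6 statements merged into one kernel-verified Lean document; each statement's English description precedes it below -/
import Mathlib

section
/- Let p be a prime number and m a natural number with m ≥ 2. Then p divides the binomial coefficient C(m,n) for every natural number n with 0 < n < m if and only if m = p^q for some positive integer q. -/
/-- Let `p` be a prime and `m ≥ 2` a natural number. Then `p` divides `C(m,n)` for every
`0 < n < m` if and only if `m = p ^ q` for some positive integer `q`. -/
theorem lucas_corollary (p : ℕ) (hp : p.Prime) (m : ℕ) (hm : 2 ≤ m) :
    (∀ n : ℕ, 0 < n → n < m → p ∣ m.choose n) ↔ ∃ q : ℕ, 0 < q ∧ m = p ^ q := by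
  have := Fact.mk hp
  constructor
  · intro hdvd
    have hpow : m = p ^ multiplicity p m :=
      Choose.eq_pow_multiplicity_of_choose_modEq_zero_nat (by omega) fun n hn => by
        rw [Finset.mem_Icc] at hn
        exact Nat.modEq_zero_iff_dvd.mpr (hdvd n (by omega) (by omega))
    refine ⟨multiplicity p m, Nat.pos_of_ne_zero fun hzero => ?_, hpow⟩
    rw [hzero, pow_zero] at hpow
    omega
  · rintro ⟨q, -, rfl⟩ n hn hnm
    exact hp.dvd_choose_pow hn.ne' hnm.ne
end

section
/- Let R be a commutative unital ring, A a unital associative R-algebra with identity 1, and α : A → A an injective R-algebra endomorphism. Then the set of derivations of the Yau twist A^α (R-linear maps δ : A → A with δ(a*b) = δ(a)*b + a*δ(b) for all a,b ∈ A, where a*b := α(a·b)) equals the set of derivations of A that commute with α (R-linear maps δ with δ(a·b) = δ(a)·b + a·δ(b) for all a,b ∈ A and δ ∘ α = α ∘ δ) if and only if δ(1) = 0 for every derivation δ of A^α. -/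
/-! The Leibniz rule at `1 · 1` forces `δ 1 = 0` for every derivation of `A`. Conversely, if a
derivation `δ` of `A^α` kills `1`, then the twisted Leibniz rule at `a * 1` reads
`δ (α a) = α (δ a)`; once `δ` commutes with `α`, the twisted Leibniz rule is `α` applied to the
ordinary one, and injectivity of `α` lets us strip it off. -/

theorem map_one_eq_zero_of_leibniz {A : Type*} [NonAssocRing A] {δ : A → A}
    (hδ : ∀ a b : A, δ (a * b) = δ a * b + a * δ b) : δ 1 = 0 := by
  simpa using hδ 1 1

namespace YauTwist

theorem map_comm_of_map_one_eq_zero {A : Type*} [NonAssocSemiring A] {α : A →+ A} {δ : A → A}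
    (hδ : ∀ a b : A, δ (α (a * b)) = α (δ a * b) + α (a * δ b)) (h₁ : δ 1 = 0) (a : A) :
    δ (α a) = α (δ a) := by
  simpa [h₁] using hδ a 1

theorem leibniz_of_map_comm {A : Type*} [NonUnitalNonAssocSemiring A] {α : A →+ A}
    (hα : Function.Injective α) {δ : A → A}
    (hδ : ∀ a b : A, δ (α (a * b)) = α (δ a * b) + α (a * δ b))
    (hcomm : ∀ a : A, δ (α a) = α (δ a)) (a b : A) :
    δ (a * b) = δ a * b + a * δ b :=
  hα <| by rw [← hcomm, hδ, map_add]

theorem twisted_leibniz_of_leibniz {A : Type*} [NonUnitalNonAssocSemiring A] {α : A →+ A}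
    {δ : A → A} (hδ : ∀ a b : A, δ (a * b) = δ a * b + a * δ b)
    (hcomm : ∀ a : A, δ (α a) = α (δ a)) (a b : A) :
    δ (α (a * b)) = α (δ a * b) + α (a * δ b) := by
  rw [hcomm, hδ, map_add]

end YauTwist

/-- Let `A` be a unital associative algebra over a commutative unital ring `R` and `α` an
injective `R`-algebra endomorphism of `A`. The set of derivations of the Yau twist `A^α`
(`R`-linear maps `δ` with `δ (a*b) = δ a * b + a * δ b` for the twisted product
`a * b := α (a·b)`) equals the set of derivations of `A` commuting with `α` if and only if
`δ 1 = 0` for every derivation `δ` of `A^α`. -/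
theorem yauTwist_derivations_eq_iff (R : Type*) (A : Type*) [CommRing R] [Ring A]
    [Algebra R A] (α : A →ₐ[R] A) (hα : Function.Injective α) :
    ({δ : A →ₗ[R] A | ∀ a b : A, δ (α (a * b)) = α (δ a * b) + α (a * δ b)} =
      {δ : A →ₗ[R] A | (∀ a b : A, δ (a * b) = δ a * b + a * δ b) ∧
        ∀ a : A, δ (α a) = α (δ a)}) ↔
    (∀ δ : A →ₗ[R] A,
      (∀ a b : A, δ (α (a * b)) = α (δ a * b) + α (a * δ b)) → δ 1 = 0) := by
  refine ⟨fun h δ hδ => ?_, fun h => ?_⟩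
  · exact map_one_eq_zero_of_leibniz (h.subset hδ).1
  · ext δ
    simp only [Set.mem_ofPred_eq]
    refine ⟨fun hδ => ?_, fun ⟨hleib, hcomm⟩ =>
      YauTwist.twisted_leibniz_of_leibniz (α := α) hleib hcomm⟩
    have hcomm := YauTwist.map_comm_of_map_one_eq_zero (α := α) hδ (h δ hδ)
    exact ⟨YauTwist.leibniz_of_map_comm (α := α) hα hδ hcomm, hcomm⟩
end

section
/- Let K be a field of prime characteristic p and let α be a K-algebra endomorphism of the polynomial ring K[y]. Then α commutes with the formal derivative d/dy (i.e. α(q') = (α(q))' for all q ∈ K[y]) if and only if α(y) = k₀ + y + k_p y^p + k_{2p} y^{2p} + ⋯, where only finitely many k₀, k_p, k_{2p}, … ∈ K are nonzero; that is, if and only if the coefficient of y in α(y) is 1 and the coefficient of y^j in α(y) is zero for every j > 1 that is not divisible by p. -/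
/-!
Every `K`-algebra endomorphism of `K[X]` is composition with `f := α X`, so by the chain rule
`(α q)' = f' · α (q')`; hence `α` commutes with `d/dX` exactly when `f' = 1`. Comparing
coefficients, `f' = 1` says `f₁ = 1` and `j · f_j = 0` for `j > 1`, and `(j : K) = 0` iff `p ∣ j`.
-/

open Polynomial

namespace Polynomial

theorem algHom_apply_eq_comp {R : Type*} [CommSemiring R] (α : R[X] →ₐ[R] R[X]) (q : R[X]) :
    α q = q.comp (α X) := by
  rw [comp_eq_aeval, aeval_algHom_apply, aeval_X_left_apply]

theorem algHom_derivative_comm_iff {R : Type*} [CommSemiring R] (α : R[X] →ₐ[R] R[X]) :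
    (∀ q : R[X], α (derivative q) = derivative (α q)) ↔ derivative (α X) = 1 := by
  have hcomp (q : R[X]) : α (derivative q) = derivative (α q) ↔
      (derivative q).comp (α X) = derivative (α X) * (derivative q).comp (α X) := by
    rw [algHom_apply_eq_comp α (derivative q), algHom_apply_eq_comp α q, derivative_comp]
  simp only [hcomp]
  refine ⟨fun h => ?_, fun h q => by rw [h, one_mul]⟩
  simpa using (h X).symm

theorem derivative_eq_one_iff {R : Type*} [Ring R] [NoZeroDivisors R] (p : ℕ) [CharP R p]
    (f : R[X]) :
    derivative f = 1 ↔ f.coeff 1 = 1 ∧ ∀ j : ℕ, 1 < j → ¬ p ∣ j → f.coeff j = 0 := by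
  have coeff_mul_cast (j : ℕ) : f.coeff j * j = 0 ↔ p ∣ j ∨ f.coeff j = 0 := by
    rw [mul_eq_zero, CharP.cast_eq_zero_iff R p, or_comm]
  rw [Polynomial.ext_iff]
  simp only [coeff_derivative, coeff_one]
  constructor
  · intro h
    refine ⟨by simpa using h 0, fun j hj hpj => ?_⟩
    obtain ⟨n, rfl⟩ : ∃ n, j = n + 1 := ⟨j - 1, by omega⟩
    have hn := h n
    rw [if_neg (by omega)] at hn
    exact ((coeff_mul_cast (n + 1)).1 (by exact_mod_cast hn)).resolve_left hpj
  · rintro ⟨h1, h⟩ (_ | n)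
    · simp [h1]
    · rw [if_neg n.succ_ne_zero]
      have hn := (coeff_mul_cast (n + 2)).2 <| (em _).imp_right (h _ (by omega))
      exact_mod_cast hn

end Polynomial

theorem endomorphism_commutes_with_derivative_iff_general (K : Type*) [Field K] (p : ℕ)
    [CharP K p] (α : Polynomial K →ₐ[K] Polynomial K) :
    (∀ q : Polynomial K, α (Polynomial.derivative q) = Polynomial.derivative (α q)) ↔
    ((α Polynomial.X).coeff 1 = 1 ∧
      ∀ j : ℕ, 1 < j → ¬ p ∣ j → (α Polynomial.X).coeff j = 0) :=
  (algHom_derivative_comm_iff α).trans (derivative_eq_one_iff p (α X))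

/-- Let `K` be a field of prime characteristic `p` and `α` a `K`-algebra endomorphism of the
polynomial ring `K[y]`. Then `α` commutes with the formal derivative `d/dy` if and only if
the coefficient of `y` in `α y` is `1` and the coefficient of `y^j` in `α y` is zero for
every `j > 1` not divisible by `p` (i.e. `α y = k₀ + y + k_p y^p + k_{2p} y^{2p} + ⋯`). -/
theorem endomorphism_commutes_with_derivative_iff (K : Type*) [Field K] (p : ℕ)
    (hp : p.Prime) [CharP K p] (α : Polynomial K →ₐ[K] Polynomial K) :
    (∀ q : Polynomial K, α (Polynomial.derivative q) = Polynomial.derivative (α q)) ↔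
    ((α Polynomial.X).coeff 1 = 1 ∧
      ∀ j : ℕ, 1 < j → ¬ p ∣ j → (α Polynomial.X).coeff j = 0) :=
  endomorphism_commutes_with_derivative_iff_general K p α
end

section
/- Let K be a field of prime characteristic p, A₁ the first Weyl algebra over K, and α_k the endomorphism of A₁ with α_k(x) = x and α_k(y) = k₀ + y + k_p y^p + k_{2p} y^{2p} + ⋯ + k_{Mp} y^{Mp}. Then α_k is injective. -/
noncomputable section

/-- The defining relation of the first Weyl algebra: `x * y = y * x + 1`. -/
inductive WeylRel (K : Type*) [Field K] :
    FreeAlgebra K (Fin 2) → FreeAlgebra K (Fin 2) → Prop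
  | comm : WeylRel K (FreeAlgebra.ι K 0 * FreeAlgebra.ι K 1)
      (FreeAlgebra.ι K 1 * FreeAlgebra.ι K 0 + 1)

/-- The first Weyl algebra `A₁` over `K`: the free unital associative `K`-algebra on two
generators `x, y` modulo the relation `x·y − y·x = 1`. -/
abbrev Weyl (K : Type*) [Field K] := RingQuot (WeylRel K)

/-- The generator `x` of the first Weyl algebra. -/
def Wx (K : Type*) [Field K] : Weyl K :=
  RingQuot.mkAlgHom K (WeylRel K) (FreeAlgebra.ι K 0)

/-- The generator `y` of the first Weyl algebra. -/
def Wy (K : Type*) [Field K] : Weyl K :=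
  RingQuot.mkAlgHom K (WeylRel K) (FreeAlgebra.ι K 1)

/-!
Let `A₁` act on `K[v][u]` with `y` as multiplication by `u` and `x` as `∂/∂u + v`. If
`α x = x` and `α y = f(y)`, then `α(yᵐxⁿ)` sends `1` to `f(u)ᵐvⁿ`. For nonconstant `f`
(here the coefficient of `u` in `f` is `1`, as `ip ≠ 1`) substituting `f` for `u` is injective,
so these images are linearly independent; as the `yᵐxⁿ` span `A₁`, `α` is injective.
-/

open Polynomial

theorem linearIndependent_pow_mul_C_X_pow {K : Type*} [Field K] {G : K[X][X]}
    (hG : G.natDegree ≠ 0) :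
    LinearIndependent K (fun mn : ℕ × ℕ ↦ G ^ mn.1 * C X ^ mn.2) := by
  let compG : K[X][X] →ₗ[K] K[X][X] := ((aeval G).toLinearMap).restrictScalars K
  have hker : LinearMap.ker compG = ⊥ := by
    refine LinearMap.ker_eq_bot'.mpr fun q hq ↦ ?_
    refine (comp_eq_zero_iff.mp hq).resolve_right fun ⟨_, hGC⟩ ↦ hG ?_
    rw [hGC, natDegree_C]
  have hmon := ((basisMonomials K).smulTower (basisMonomials K[X])).linearIndependent
  have hfun : (fun mn : ℕ × ℕ ↦ G ^ mn.1 * C X ^ mn.2) =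
      compG ∘ (basisMonomials K).smulTower (basisMonomials K[X]) ∘ Prod.swap := by
    funext ⟨m, n⟩
    simp [compG, Module.Basis.smulTower_apply, ← X_pow_eq_monomial, smul_eq_C_mul, mul_comm]
  rw [hfun]
  exact (hmon.map' compG hker).comp Prod.swap Prod.swap_injective

namespace Weyl

variable (K : Type*) [Field K]

theorem Wx_mul_Wy : Wx K * Wy K = Wy K * Wx K + 1 := by
  simpa only [Wx, Wy, map_mul, map_add, map_one] using
    RingQuot.mkAlgHom_rel K (WeylRel.comm (K := K))

def monomial (mn : ℕ × ℕ) : Weyl K := Wy K ^ mn.1 * Wx K ^ mn.2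

theorem mul_mem_span_monomial {a : Weyl K}
    (h : ∀ mn, a * monomial K mn ∈ Submodule.span K (Set.range (monomial K)))
    {s : Weyl K} (hs : s ∈ Submodule.span K (Set.range (monomial K))) :
    a * s ∈ Submodule.span K (Set.range (monomial K)) :=
  (Submodule.span_le (p := (Submodule.span K _).comap (LinearMap.mulLeft K a)) |>.mpr
    (by rintro _ ⟨mn, rfl⟩; exact h mn)) hs

theorem Wy_mul_mem_span_monomial {s : Weyl K}
    (hs : s ∈ Submodule.span K (Set.range (monomial K))) :
    Wy K * s ∈ Submodule.span K (Set.range (monomial K)) :=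
  mul_mem_span_monomial K (fun ⟨m, n⟩ ↦ Submodule.subset_span ⟨(m + 1, n), by
    simp only [monomial, pow_succ', mul_assoc]⟩) hs

theorem Wx_mul_mem_span_monomial {s : Weyl K}
    (hs : s ∈ Submodule.span K (Set.range (monomial K))) :
    Wx K * s ∈ Submodule.span K (Set.range (monomial K)) := by
  refine mul_mem_span_monomial K (fun ⟨m, n⟩ ↦ ?_) hs
  induction m with
  | zero => exact Submodule.subset_span ⟨(0, n + 1), by simp [monomial, pow_succ']⟩
  | succ m ih =>
    have h : Wx K * monomial K (m + 1, n) =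
        Wy K * (Wx K * monomial K (m, n)) + monomial K (m, n) := by
      simp only [monomial, pow_succ', ← mul_assoc, Wx_mul_Wy, add_mul, one_mul]
    rw [h]
    exact add_mem (Wy_mul_mem_span_monomial K ih) (Submodule.subset_span ⟨(m, n), rfl⟩)

theorem span_monomial : Submodule.span K (Set.range (monomial K)) = ⊤ := by
  suffices h : ∀ a s : Weyl K, s ∈ Submodule.span K (Set.range (monomial K)) →
      a * s ∈ Submodule.span K (Set.range (monomial K)) by
    refine Submodule.eq_top_iff'.mpr fun a ↦ mul_one a ▸ h a 1 ?_
    exact Submodule.subset_span ⟨(0, 0), by simp [monomial]⟩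
  intro a
  obtain ⟨w, rfl⟩ := RingQuot.mkAlgHom_surjective K (WeylRel K) a
  induction w using FreeAlgebra.induction with
  | grade0 r =>
    intro s hs
    rw [AlgHom.commutes, Algebra.algebraMap_eq_smul_one, smul_one_mul]
    exact Submodule.smul_mem _ r hs
  | grade1 i =>
    fin_cases i
    · exact fun _ ↦ Wx_mul_mem_span_monomial K
    · exact fun _ ↦ Wy_mul_mem_span_monomial K
  | mul u v hu hv => exact fun s hs ↦ by rw [map_mul, mul_assoc]; exact hu _ (hv s hs)
  | add u v hu hv => exact fun s hs ↦ by rw [map_add, add_mul]; exact add_mem (hu s hs) (hv s hs)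

/-- The action of `A₁` on `K[v][u]` (outer variable `u`, `v = C X`). -/
def rep : Weyl K →ₐ[K] Module.End K K[X][X] :=
  RingQuot.liftAlgHom K ⟨FreeAlgebra.lift K
    ![derivative.restrictScalars K + LinearMap.mulLeft K (C X), LinearMap.mulLeft K X], by
    rintro _ _ ⟨⟩
    ext f : 1
    simp only [map_mul, map_add, map_one, FreeAlgebra.lift_ι_apply, Matrix.cons_val_zero,
      Matrix.cons_val_one, Module.End.mul_apply, LinearMap.add_apply, LinearMap.mulLeft_apply,
      LinearMap.coe_restrictScalars, Module.End.one_apply, derivative_mul, derivative_X,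
      one_mul]
    ring⟩

theorem rep_Wx :
    rep K (Wx K) = derivative.restrictScalars K + LinearMap.mulLeft K (C X) := by
  simp [rep, Wx]

theorem rep_Wy : rep K (Wy K) = LinearMap.mulLeft K X := by
  simp [rep, Wy]

theorem rep_Wx_pow_one (n : ℕ) : (rep K (Wx K) ^ n) 1 = C X ^ n := by
  induction n with
  | zero => rfl
  | succ n ih =>
    rw [pow_succ', Module.End.mul_apply, ih, rep_Wx]
    simp [← map_pow, pow_succ']

theorem rep_aeval_Wy (f : K[X]) :
    rep K (aeval (Wy K) f) = LinearMap.mulLeft K (f.map C) := by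
  change rep K (aeval (Wy K) f) = Algebra.lmul K K[X][X] (f.map (algebraMap K K[X]))
  rw [← aeval_algHom_apply, rep_Wy, ← aeval_X_left_eq_map, ← aeval_algHom_apply]
  rfl

variable {K}

theorem rep_map_monomial_one {f : K[X]} {α : Weyl K →ₐ[K] Weyl K} (hx : α (Wx K) = Wx K)
    (hy : α (Wy K) = aeval (Wy K) f) (mn : ℕ × ℕ) :
    rep K (α (monomial K mn)) 1 = f.map C ^ mn.1 * C X ^ mn.2 := by
  rw [monomial, map_mul, map_pow, map_pow, hx, hy, map_mul, map_pow, map_pow, rep_aeval_Wy,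
    LinearMap.pow_mulLeft, Module.End.mul_apply, rep_Wx_pow_one, LinearMap.mulLeft_apply]

theorem algHom_injective_of_map_Wy_eq_aeval {f : K[X]} (hf : f.natDegree ≠ 0)
    {α : Weyl K →ₐ[K] Weyl K} (hx : α (Wx K) = Wx K) (hy : α (Wy K) = aeval (Wy K) f) :
    Function.Injective α := by
  have hcomp : (fun a ↦ rep K a 1) ∘ α ∘ Finsupp.linearCombination K (monomial K) =
      Finsupp.linearCombination K (fun mn : ℕ × ℕ ↦ f.map C ^ mn.1 * C X ^ mn.2) := by
    funext c
    simp [Finsupp.linearCombination_apply, Finsupp.sum, rep_map_monomial_one hx hy]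
  have hind : LinearIndependent K (fun mn : ℕ × ℕ ↦ f.map C ^ mn.1 * C X ^ mn.2) :=
    linearIndependent_pow_mul_C_X_pow (by rwa [natDegree_map_eq_of_injective C_injective])
  have hsurj : Function.Surjective (Finsupp.linearCombination K (monomial K)) := by
    rw [← LinearMap.range_eq_top, Finsupp.range_linearCombination, span_monomial]
  rw [LinearIndependent, ← hcomp] at hind
  exact (Function.Injective.of_comp hind).of_comp_right hsurj

end Weyl

theorem alphaK_injective_general (K : Type*) [Field K] (p : ℕ) (hp : p.Prime)
    (M : ℕ) (k : ℕ → K) (α : Weyl K →ₐ[K] Weyl K)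
    (hx : α (Wx K) = Wx K)
    (hy : α (Wy K) = Wy K + ∑ i ∈ Finset.range (M + 1), k i • (Wy K) ^ (i * p)) :
    Function.Injective α := by
  set f : K[X] := X + ∑ i ∈ Finset.range (M + 1), k i • X ^ (i * p)
  have hcoeff : f.coeff 1 = 1 := by
    have hip : ∀ i, 1 ≠ i * p := fun i h ↦ hp.ne_one (Nat.eq_one_of_mul_eq_one_left h.symm)
    simp [f, finsetSum_coeff, coeff_X_pow, hip]
  refine Weyl.algHom_injective_of_map_Wy_eq_aeval (f := f) ?_ hx ?_
  · exact Nat.one_le_iff_ne_zero.mp (le_natDegree_of_ne_zero (by simp [hcoeff]))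
  · simp [f, hy, map_sum]

/-- The twisting endomorphism `α_k` of the first Weyl algebra (the unital `K`-algebra
endomorphism with `α_k x = x` and `α_k y = k₀ + y + k_p y^p + ⋯ + k_{Mp} y^{Mp}`, where
`k i` denotes `k_{ip}`) is injective. -/
theorem alphaK_injective (K : Type*) [Field K] (p : ℕ) (hp : p.Prime) [CharP K p]
    (M : ℕ) (k : ℕ → K) (α : Weyl K →ₐ[K] Weyl K)
    (hx : α (Wx K) = Wx K)
    (hy : α (Wy K) = Wy K + ∑ i ∈ Finset.range (M + 1), k i • (Wy K) ^ (i * p)) :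
    Function.Injective α :=
  alphaK_injective_general K p hp M k α hx hy
end
end

section
/- Let K be a field of prime characteristic p, A₁ the first Weyl algebra over K, and α_k the endomorphism of A₁ with α_k(x) = x and α_k(y) = k₀ + y + k_p y^p + ⋯ + k_{Mp} y^{Mp}. Then α_k is surjective if and only if k_p = k_{2p} = ⋯ = k_{Mp} = 0, i.e. if and only if α_k(y) = k₀ + y. -/
noncomputable section

/-!
Represent `A₁` on `K[X]` with `x ↦ d/dX` and `y ↦ X·`, and precompose with `α_k`: then `x` acts
as `d/dX` and `y` as multiplication by `f = X + ∑ kᵢ X^{ip}`. Since `f' = 1` in characteristic `p`,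
the subalgebra `K[f] ⊆ K[X]` is stable under both operators, hence under the whole image of `A₁`.
If `α_k` is onto, some element acts as multiplication by `X`, so `X ∈ K[f]` and `deg f ≤ 1`,
which kills every `k_{ip}` with `i ≥ 1`. Conversely, if `α_k y = y + k₀` then `x` and `y`
both lie in the image of `α_k`.
-/

open Polynomial

def Submodule.invtSubalgebra {R M : Type*} [CommSemiring R] [AddCommMonoid M] [Module R M]
    (N : Submodule R M) : Subalgebra R (Module.End R M) where
  carrier := {T | ∀ m ∈ N, T m ∈ N}
  mul_mem' ha hb _ hm := ha _ (hb _ hm)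
  add_mem' ha hb _ hm := N.add_mem (ha _ hm) (hb _ hm)
  algebraMap_mem' r _ hm := N.smul_mem r hm

theorem Polynomial.derivative_mem_adjoin_singleton {R : Type*} [CommSemiring R] {f q : R[X]}
    (hf : derivative f ∈ Algebra.adjoin R {f}) (hq : q ∈ Algebra.adjoin R {f}) :
    derivative q ∈ Algebra.adjoin R {f} := by
  rw [Algebra.adjoin_singleton_eq_range_aeval] at hf hq ⊢
  obtain ⟨q, rfl⟩ := hq
  rw [AlgHom.toRingHom_eq_coe, RingHom.coe_coe, ← comp_eq_aeval, derivative_comp, comp_eq_aeval]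
  exact mul_mem hf (AlgHom.mem_range_self _ _)

theorem Polynomial.natDegree_le_one_of_X_mem_adjoin_singleton {R : Type*} [CommRing R]
    [IsDomain R] {f : R[X]} (hX : X ∈ Algebra.adjoin R {f}) : f.natDegree ≤ 1 := by
  rw [Algebra.adjoin_singleton_eq_range_aeval, AlgHom.mem_range] at hX
  obtain ⟨q, hq⟩ := hX
  have hdeg : q.natDegree * f.natDegree = 1 := by
    rw [← natDegree_comp, comp_eq_aeval, hq, natDegree_X]
  exact (Nat.eq_one_of_mul_eq_one_left hdeg).le

namespace Weyl

variable {K : Type*} [Field K]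

theorem adjoin_Wx_Wy : Algebra.adjoin K {Wx K, Wy K} = ⊤ := by
  rw [eq_top_iff]
  rintro a -
  obtain ⟨b, rfl⟩ := RingQuot.mkAlgHom_surjective K (WeylRel K) a
  induction b using FreeAlgebra.induction with
  | grade0 r =>
    rw [AlgHom.commutes]
    exact Subalgebra.algebraMap_mem _ r
  | grade1 i =>
    fin_cases i
    · exact Algebra.subset_adjoin (Set.mem_insert _ _)
    · exact Algebra.subset_adjoin (Set.mem_insert_of_mem _ rfl)
  | mul a b ha hb => rw [map_mul]; exact mul_mem ha hb
  | add a b ha hb => rw [map_add]; exact add_mem ha hb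

theorem eq_top_of_Wx_mem_of_Wy_mem {S : Subalgebra K (Weyl K)} (hx : Wx K ∈ S)
    (hy : Wy K ∈ S) : S = ⊤ :=
  top_le_iff.mp <| adjoin_Wx_Wy (K := K) ▸ Algebra.adjoin_le (Set.pair_subset hx hy)

theorem range_le_of_map_Wx_mem_of_map_Wy_mem {B : Type*} [Semiring B] [Algebra K B]
    (β : Weyl K →ₐ[K] B) {S : Subalgebra K B} (hx : β (Wx K) ∈ S) (hy : β (Wy K) ∈ S) :
    β.range ≤ S := by
  rintro _ ⟨a, rfl⟩
  have hcomap : S.comap β = ⊤ := eq_top_of_Wx_mem_of_Wy_mem hx hy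
  exact (hcomap ▸ Algebra.mem_top : a ∈ S.comap β)

theorem surjective_of_Wx_mem_range_of_Wy_mem_range {α : Weyl K →ₐ[K] Weyl K}
    (hx : Wx K ∈ α.range) (hy : Wy K ∈ α.range) : Function.Surjective α :=
  α.range_eq_top.mp (eq_top_of_Wx_mem_of_Wy_mem hx hy)

variable (K) in
def polynomialRep : Weyl K →ₐ[K] Module.End K K[X] :=
  RingQuot.liftAlgHom K ⟨FreeAlgebra.lift K ![derivative, Algebra.lmul K K[X] X], by
    rintro _ _ ⟨⟩
    refine LinearMap.ext fun q => ?_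
    simp [add_comm]⟩

theorem polynomialRep_Wx : polynomialRep K (Wx K) = derivative := by
  simp [polynomialRep, Wx]

theorem polynomialRep_Wy : polynomialRep K (Wy K) = Algebra.lmul K K[X] X := by
  simp [polynomialRep, Wy]

theorem polynomialRep_aeval_Wy (q : K[X]) :
    polynomialRep K (aeval (Wy K) q) = Algebra.lmul K K[X] q := by
  rw [← aeval_algHom_apply, polynomialRep_Wy, aeval_algHom_apply, aeval_X_left_apply]

theorem natDegree_le_one_of_surjective {α : Weyl K →ₐ[K] Weyl K} {f : K[X]}
    (hf : derivative f = 1) (hx : α (Wx K) = Wx K) (hy : α (Wy K) = aeval (Wy K) f)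
    (hα : Function.Surjective α) : f.natDegree ≤ 1 := by
  let N := Subalgebra.toSubmodule (Algebra.adjoin K {f})
  let ψ := (polynomialRep K).comp α
  have hrange : ψ.range ≤ N.invtSubalgebra := by
    refine range_le_of_map_Wx_mem_of_map_Wy_mem ψ (fun q hq => ?_) (fun q hq => ?_) <;>
      rw [Subalgebra.mem_toSubmodule] at hq ⊢
    · rw [AlgHom.comp_apply, hx, polynomialRep_Wx]
      exact derivative_mem_adjoin_singleton (hf ▸ one_mem (Algebra.adjoin K {f})) hq
    · rw [AlgHom.comp_apply, hy, polynomialRep_aeval_Wy]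
      exact mul_mem (Algebra.self_mem_adjoin_singleton K f) hq
  obtain ⟨a, ha⟩ := hα (Wy K)
  have hX : polynomialRep K (Wy K) ∈ N.invtSubalgebra := ha ▸ hrange ⟨a, rfl⟩
  apply natDegree_le_one_of_X_mem_adjoin_singleton
  simpa [N, polynomialRep_Wy] using hX 1 (one_mem (Algebra.adjoin K {f}))

end Weyl

/-- The twisting endomorphism `α_k` of the first Weyl algebra (the unital `K`-algebra
endomorphism with `α_k x = x` and `α_k y = k₀ + y + k_p y^p + ⋯ + k_{Mp} y^{Mp}`, where
`k i` denotes `k_{ip}`) is surjective if and only if `k_p = k_{2p} = ⋯ = k_{Mp} = 0`,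
i.e. if and only if `α_k y = k₀ + y`. -/
theorem alphaK_surjective_iff (K : Type*) [Field K] (p : ℕ) (hp : p.Prime) [CharP K p]
    (M : ℕ) (k : ℕ → K) (α : Weyl K →ₐ[K] Weyl K)
    (hx : α (Wx K) = Wx K)
    (hy : α (Wy K) = Wy K + ∑ i ∈ Finset.range (M + 1), k i • (Wy K) ^ (i * p)) :
    Function.Surjective α ↔ ∀ i ∈ Finset.Icc 1 M, k i = 0 := by
  set f : K[X] := X + ∑ i ∈ Finset.range (M + 1), k i • X ^ (i * p)
  have hyf : α (Wy K) = aeval (Wy K) f := by simp [f, hy]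
  have hf : derivative f = 1 := by simp [f, derivative_X_pow, CharP.cast_eq_zero]
  constructor
  · intro hα i hi
    rw [Finset.mem_Icc] at hi
    have hip : 2 ≤ i * p := hp.two_le.trans (Nat.le_mul_of_pos_left p hi.1)
    have hcoeff : f.coeff (i * p) = k i := by
      have hne : ¬1 = i * p := by omega
      simp [f, coeff_X, hp.ne_zero, hne, hi.2]
    have hdeg := Weyl.natDegree_le_one_of_surjective hf hx hyf hα
    rw [← hcoeff]
    exact coeff_eq_zero_of_natDegree_lt (hdeg.trans_lt hip)
  · intro hk
    refine Weyl.surjective_of_Wx_mem_range_of_Wy_mem_range ⟨Wx K, hx⟩ ?_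
    have hsum : ∑ i ∈ Finset.range (M + 1), k i • (Wy K) ^ (i * p) ∈ α.range := by
      refine Subalgebra.sum_mem _ fun i hi => ?_
      rcases Nat.eq_zero_or_pos i with rfl | hi0
      · simpa only [zero_mul, pow_zero] using Subalgebra.smul_mem α.range (one_mem _) (k 0)
      · simp [hk i (Finset.mem_Icc.mpr ⟨hi0, Nat.lt_succ_iff.mp (Finset.mem_range.mp hi)⟩)]
    rw [← add_sub_cancel_right (Wy K) (∑ i ∈ Finset.range (M + 1), k i • (Wy K) ^ (i * p)), ← hy]
    exact sub_mem (AlgHom.mem_range_self _ _) hsum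
end
end

section
/- The hom-associative Weyl algebra A₁ᵏ is not simple: there exists a subset I of A₁ that is a K-submodule of A₁, satisfies a * i ∈ I and i * a ∈ I for all a ∈ A₁ and i ∈ I (where a * b := α_k(a·b)), and is neither {0} nor all of A₁. (One may take I to be the two-sided ideal of A₁ᵏ generated by x^p.) -/
noncomputable section

/-!
Since `α` fixes `x`, it fixes `x^p`, so it maps the ordinary two-sided ideal `(x^p)` of `A₁` into
itself; that ideal is therefore also an ideal of the twisted product. It is proper and nonzero,
as two representations of `A₁` on `K[X]` show. In `y ↦ X·, x ↦ d/dX` the element `x^p` acts as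
`(d/dX)^p = p! • (Hasse derivative) = 0`, so `(x^p)` lies in the kernel while `1` does not. In
`x ↦ X·, y ↦ -d/dX` the element `x^p` acts as multiplication by `X^p ≠ 0`.
-/

theorem TwoSidedIdeal.map_mem_span_singleton {R : Type*} [Ring R] {f : R →+* R} {c : R}
    (hc : f c = c) {z : R} (hz : z ∈ span {c}) : f z ∈ span {c} := by
  have hle : span {c} ≤ comap f (span {c}) :=
    span_le.2 <| Set.singleton_subset_iff.2 <| (mem_comap f).2 <| by
      rw [hc]; exact subset_span rfl
  exact (mem_comap f).1 (hle hz)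

namespace Polynomial

variable {R : Type*} [CommRing R]

theorem derivative_mul_mulLeft_X :
    (derivative : Module.End R R[X]) * LinearMap.mulLeft R X
      = LinearMap.mulLeft R X * derivative + 1 := by
  refine LinearMap.ext fun f => ?_
  simp only [Module.End.mul_apply, LinearMap.add_apply, Module.End.one_apply,
    LinearMap.mulLeft_apply, derivative_mul, derivative_X, one_mul]
  ring

theorem iterate_derivative_eq_zero_of_charP (p : ℕ) [CharP R p] (hp : p ≠ 0) (f : R[X]) :
    derivative^[p] f = 0 := by
  have hfact : (p.factorial : R) = 0 :=
    (CharP.cast_eq_zero_iff R p _).2 (Nat.dvd_factorial (Nat.pos_of_ne_zero hp) le_rfl)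
  rw [← factorial_smul_hasseDeriv, LinearMap.smul_apply, ← Nat.cast_smul_eq_nsmul R, hfact,
    zero_smul]

end Polynomial

namespace Weyl

variable {K : Type*} [Field K]

def lift {A : Type*} [Ring A] [Algebra K A] (a b : A) (h : a * b = b * a + 1) :
    Weyl K →ₐ[K] A :=
  RingQuot.liftAlgHom K ⟨FreeAlgebra.lift K ![a, b], by
    rintro _ _ ⟨⟩
    simpa only [map_mul, map_add, map_one, FreeAlgebra.lift_ι_apply, Matrix.cons_val_zero,
      Matrix.cons_val_one] using h⟩

theorem lift_Wx {A : Type*} [Ring A] [Algebra K A] (a b : A) (h : a * b = b * a + 1) :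
    lift a b h (Wx K) = a := by
  rw [Wx, lift, RingQuot.liftAlgHom_mkAlgHom_apply, FreeAlgebra.lift_ι_apply]
  rfl

theorem rel_swap_neg {A : Type*} [Ring A] {a b : A} (h : a * b = b * a + 1) :
    b * -a = -a * b + 1 := by
  rw [mul_neg, neg_mul, h]
  abel

open Polynomial in
theorem Wx_pow_ne_zero (n : ℕ) : Wx K ^ n ≠ 0 := by
  intro h
  have hρ := congrArg
    (fun z => lift _ _ (rel_swap_neg derivative_mul_mulLeft_X) z (1 : K[X])) h
  simp only [map_pow, lift_Wx, LinearMap.pow_mulLeft, LinearMap.mulLeft_apply, mul_one,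
    map_zero, LinearMap.zero_apply] at hρ
  exact pow_ne_zero n X_ne_zero hρ

open Polynomial in
theorem one_notMem_span_Wx_pow (p : ℕ) [CharP K p] (hp : p ≠ 0) :
    (1 : Weyl K) ∉ TwoSidedIdeal.span {Wx K ^ p} := by
  set ρ := lift (K := K) derivative (LinearMap.mulLeft K X) derivative_mul_mulLeft_X
  have hxp : ρ (Wx K ^ p) = 0 := by
    refine LinearMap.ext fun f => ?_
    rw [map_pow, lift_Wx, Module.End.pow_apply, iterate_derivative_eq_zero_of_charP p hp]
    rfl
  have hle : TwoSidedIdeal.span {Wx K ^ p} ≤ TwoSidedIdeal.ker ρ :=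
    TwoSidedIdeal.span_le.2 <| Set.singleton_subset_iff.2 <| (TwoSidedIdeal.mem_ker ρ).2 hxp
  intro h1
  exact one_ne_zero (map_one ρ ▸ (TwoSidedIdeal.mem_ker ρ).1 (hle h1))

end Weyl

theorem homWeyl_not_simple_general (K : Type*) [Field K] (p : ℕ) (hp : p.Prime) [CharP K p]
    (α : Weyl K →ₐ[K] Weyl K)
    (hx : α (Wx K) = Wx K) :
    ∃ I : Submodule K (Weyl K),
      (∀ a : Weyl K, ∀ i ∈ I, α (a * i) ∈ I) ∧
      (∀ a : Weyl K, ∀ i ∈ I, α (i * a) ∈ I) ∧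
      I ≠ ⊥ ∧ I ≠ ⊤ := by
  set J := TwoSidedIdeal.span {Wx K ^ p}
  have hαJ : ∀ z ∈ J, α z ∈ J := fun z =>
    TwoSidedIdeal.map_mem_span_singleton (f := α.toRingHom) (by simp [hx])
  refine ⟨J.asIdeal.restrictScalars K, fun a i hi => hαJ _ (J.mul_mem_left a i hi),
    fun a i hi => hαJ _ (J.mul_mem_right i a hi), ?_, ?_⟩
  · exact (Submodule.ne_bot_iff _).2
      ⟨_, TwoSidedIdeal.subset_span rfl, Weyl.Wx_pow_ne_zero p⟩
  · intro htop
    exact Weyl.one_notMem_span_Wx_pow p hp.ne_zero (htop ▸ Submodule.mem_top)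

/-- The hom-associative Weyl algebra `A₁ᵏ` (the Yau twist of `A₁` by `α_k`, with product
`a * b := α_k (a·b)`) is not simple: there is a `K`-submodule of `A₁` closed under left and
right twisted multiplication by arbitrary elements, which is neither `{0}` nor all of `A₁`. -/
theorem homWeyl_not_simple (K : Type*) [Field K] (p : ℕ) (hp : p.Prime) [CharP K p]
    (M : ℕ) (k : ℕ → K) (α : Weyl K →ₐ[K] Weyl K)
    (hx : α (Wx K) = Wx K)
    (hy : α (Wy K) = Wy K + ∑ i ∈ Finset.range (M + 1), k i • (Wy K) ^ (i * p)) :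
    ∃ I : Submodule K (Weyl K),
      (∀ a : Weyl K, ∀ i ∈ I, α (a * i) ∈ I) ∧
      (∀ a : Weyl K, ∀ i ∈ I, α (i * a) ∈ I) ∧
      I ≠ ⊥ ∧ I ≠ ⊤ :=
  homWeyl_not_simple_general K p hp α hx
end
end
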